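/- Let μ, ν be finite measures on a measurable space Ω and a : Ω → ℝ^d a measurable map with ∫ ‖a(θ)‖² dμ(θ) < ∞ and ∫ ‖a(θ)‖² dν(θ) < ∞. Assume AᵀA[μ] and AᵀA[ν] are both positive definite. Then for every t ∈ [0,1], AᵀA[t·μ + (1−t)·ν] is positive definite and Tr((AᵀA[t·μ + (1−t)·ν])⁻¹) ≤ t · Tr((AᵀA[μ])⁻¹) + (1−t) · Tr((AᵀA[ν])⁻¹). That is, the A-optimal objective F^A[ρ] = Tr((AᵀA[ρ])⁻¹) is convex along linear interpolations of measures. -/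

import Mathlib

open Matrix MeasureTheory

/-- The second-moment matrix `AᵀA[μ] = ∫ a(θ) a(θ)ᵀ dμ(θ)`, computed entrywise. -/
noncomputable def ATA {Ω : Type*} [MeasurableSpace Ω] (μ : Measure Ω)
    {d : ℕ} (a : Ω → Fin d → ℝ) : Matrix (Fin d) (Fin d) ℝ :=
  Matrix.of fun i j => ∫ θ, a θ i * a θ j ∂μ

section Aux

variable {d : ℕ}

/-- For a positive definite `A` and any `x, y`, we have
`2⟨x,y⟩ - ⟨y, A y⟩ ≤ ⟨x, A⁻¹ x⟩` (Fenchel-type bound, equality at `y = A⁻¹ x`). -/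
lemma key_quad {A : Matrix (Fin d) (Fin d) ℝ} (hA : A.PosDef) (x y : Fin d → ℝ) :
    2 * (x ⬝ᵥ y) - y ⬝ᵥ A *ᵥ y ≤ x ⬝ᵥ A⁻¹ *ᵥ x := by
  have hdet : IsUnit A.det := isUnit_iff_ne_zero.mpr (ne_of_gt hA.det_pos)
  set w : Fin d → ℝ := A⁻¹ *ᵥ x with hw
  set z : Fin d → ℝ := y - w with hz
  have hsymm : Aᵀ = A := by
    have := hA.isHermitian
    exact (Matrix.conjTranspose_eq_transpose_of_trivial A).symm.trans this.eq
  have h0 : 0 ≤ z ⬝ᵥ A *ᵥ z := by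
    have := hA.posSemidef.dotProduct_mulVec_nonneg z
    simpa using this
  have hAw : A *ᵥ w = x := by
    rw [hw, mulVec_mulVec, A.mul_nonsing_inv hdet, one_mulVec]
  have hAz : A *ᵥ z = A *ᵥ y - x := by
    rw [hz, mulVec_sub, hAw]
  have e2 : w ⬝ᵥ (A *ᵥ y) = x ⬝ᵥ y := by
    rw [dotProduct_mulVec, ← Matrix.mulVec_transpose, hsymm, hAw]
  have e3 : w ⬝ᵥ x = x ⬝ᵥ A⁻¹ *ᵥ x := by
    rw [hw, dotProduct_comm]
  have e4 : y ⬝ᵥ x = x ⬝ᵥ y := dotProduct_comm y x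
  have e1 : z ⬝ᵥ A *ᵥ z
      = y ⬝ᵥ A *ᵥ y - y ⬝ᵥ x - w ⬝ᵥ (A *ᵥ y) + w ⬝ᵥ x := by
    rw [hz, hAz]
    simp only [sub_dotProduct, dotProduct_sub]
    ring
  rw [e1, e2, e3, e4] at h0
  linarith

lemma diag_as_quad (C : Matrix (Fin d) (Fin d) ℝ) (i : Fin d) :
    (Pi.single i 1 : Fin d → ℝ) ⬝ᵥ C *ᵥ (Pi.single i 1) = C i i := by
  simp [single_dotProduct, Matrix.mulVec_single]

/-- Convexity of `M ↦ trace M⁻¹` on positive definite matrices. -/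
lemma trace_inv_convex {A B : Matrix (Fin d) (Fin d) ℝ}
    (hA : A.PosDef) (hB : B.PosDef) {t : ℝ} (ht0 : 0 ≤ t) (ht1 : t ≤ 1) :
    (t • A + (1 - t) • B).PosDef ∧
      ((t • A + (1 - t) • B)⁻¹).trace ≤ t * (A⁻¹).trace + (1 - t) * (B⁻¹).trace := by
  have hs0 : (0 : ℝ) ≤ 1 - t := by linarith
  set M : Matrix (Fin d) (Fin d) ℝ := t • A + (1 - t) • B with hM
  have hquad : ∀ v : Fin d → ℝ,
      v ⬝ᵥ M *ᵥ v = t * (v ⬝ᵥ A *ᵥ v) + (1 - t) * (v ⬝ᵥ B *ᵥ v) := by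
    intro v
    simp [hM, Matrix.add_mulVec, Matrix.smul_mulVec, dotProduct_add,
      dotProduct_smul, smul_eq_mul]
  have hMpd : M.PosDef := by
    refine Matrix.PosDef.of_dotProduct_mulVec_pos ?_ ?_
    · have h1 := hA.isHermitian.eq
      have h2 := hB.isHermitian.eq
      show Mᴴ = M
      simp only [hM, conjTranspose_add, conjTranspose_smul, h1, h2, star_trivial]
    · intro v hv
      have hAv := hA.posSemidef.dotProduct_mulVec_nonneg v
      have hBv := hB.posSemidef.dotProduct_mulVec_nonneg v
      simp only [star_trivial] at hAv hBv ⊢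
      rw [hquad v]
      rcases lt_or_eq_of_le ht0 with htpos | hteq
      · have := hA.dotProduct_mulVec_pos hv
        simp only [star_trivial] at this
        nlinarith
      · have h1 : (1 : ℝ) - t = 1 := by rw [← hteq]; ring
        have := hB.dotProduct_mulVec_pos hv
        simp only [star_trivial] at this
        nlinarith
  refine ⟨hMpd, ?_⟩
  have hMdet : IsUnit M.det := isUnit_iff_ne_zero.mpr (ne_of_gt hMpd.det_pos)
  -- pointwise bound on diagonal entries of the inverses
  have hdiag : ∀ i : Fin d, (M⁻¹) i i ≤ t * (A⁻¹) i i + (1 - t) * (B⁻¹) i i := by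
    intro i
    set x : Fin d → ℝ := Pi.single i 1 with hx
    set y : Fin d → ℝ := M⁻¹ *ᵥ x with hy
    have hMy : M *ᵥ y = x := by
      rw [hy, mulVec_mulVec, M.mul_nonsing_inv hMdet, one_mulVec]
    have hMinv : (M⁻¹) i i = 2 * (x ⬝ᵥ y) - y ⬝ᵥ M *ᵥ y := by
      have h1 : y ⬝ᵥ M *ᵥ y = x ⬝ᵥ y := by
        rw [hMy, dotProduct_comm]
      have h2 : x ⬝ᵥ M⁻¹ *ᵥ x = x ⬝ᵥ y := by rw [hy]
      rw [← diag_as_quad M⁻¹ i, ← hx, h1, h2]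
      ring
    have hsplit : 2 * (x ⬝ᵥ y) - y ⬝ᵥ M *ᵥ y
        = t * (2 * (x ⬝ᵥ y) - y ⬝ᵥ A *ᵥ y) + (1 - t) * (2 * (x ⬝ᵥ y) - y ⬝ᵥ B *ᵥ y) := by
      rw [hquad y]; ring
    have hbA := key_quad hA x y
    have hbB := key_quad hB x y
    have hAi : x ⬝ᵥ A⁻¹ *ᵥ x = (A⁻¹) i i := by rw [hx, diag_as_quad]
    have hBi : x ⬝ᵥ B⁻¹ *ᵥ x = (B⁻¹) i i := by rw [hx, diag_as_quad]
    rw [hMinv, hsplit]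
    rw [hAi] at hbA
    rw [hBi] at hbB
    have := mul_le_mul_of_nonneg_left hbA ht0
    have := mul_le_mul_of_nonneg_left hbB hs0
    linarith
  -- sum up
  simp only [Matrix.trace, Matrix.diag]
  calc ∑ i, (M⁻¹) i i ≤ ∑ i, (t * (A⁻¹) i i + (1 - t) * (B⁻¹) i i) :=
        Finset.sum_le_sum fun i _ => hdiag i
    _ = t * ∑ i, (A⁻¹) i i + (1 - t) * ∑ i, (B⁻¹) i i := by
        rw [Finset.sum_add_distrib, Finset.mul_sum, Finset.mul_sum]

end Aux

section ATALin

variable {Ω : Type*} [MeasurableSpace Ω] {d : ℕ}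

lemma integrable_entry {ρ : Measure Ω} {a : Ω → Fin d → ℝ} (ha : Measurable a)
    (hint : Integrable (fun θ => ∑ i, (a θ i) ^ 2) ρ) (i j : Fin d) :
    Integrable (fun θ => a θ i * a θ j) ρ := by
  refine hint.mono ?_ ?_
  · exact (((measurable_pi_apply i).comp ha).mul
      ((measurable_pi_apply j).comp ha)).aestronglyMeasurable
  · filter_upwards with θ
    have h1 : (a θ i) ^ 2 ≤ ∑ k, (a θ k) ^ 2 :=
      Finset.single_le_sum (fun k _ => sq_nonneg (a θ k)) (Finset.mem_univ i)
    have h2 : (a θ j) ^ 2 ≤ ∑ k, (a θ k) ^ 2 :=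
      Finset.single_le_sum (fun k _ => sq_nonneg (a θ k)) (Finset.mem_univ j)
    have hsum : (0 : ℝ) ≤ ∑ k, (a θ k) ^ 2 :=
      Finset.sum_nonneg fun k _ => sq_nonneg (a θ k)
    have habs : |a θ i * a θ j| ≤ ((a θ i) ^ 2 + (a θ j) ^ 2) / 2 := by
      rw [abs_mul]
      nlinarith [sq_nonneg (|a θ i| - |a θ j|), abs_nonneg (a θ i), abs_nonneg (a θ j),
        sq_abs (a θ i), sq_abs (a θ j)]
    rw [Real.norm_eq_abs, Real.norm_eq_abs, abs_of_nonneg hsum]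
    linarith

lemma nnreal_smul_measure (c : NNReal) (ρ : Measure Ω) :
    (c • ρ) = ((c : ENNReal) • ρ) := by
  ext s hs
  rw [Measure.smul_apply, Measure.smul_apply, ENNReal.smul_def]

lemma ATA_mix (μ ν : Measure Ω) (a : Ω → Fin d → ℝ) (ha : Measurable a)
    (hintμ : Integrable (fun θ => ∑ i, (a θ i) ^ 2) μ)
    (hintν : Integrable (fun θ => ∑ i, (a θ i) ^ 2) ν)
    {t : ℝ} (ht0 : 0 ≤ t) (ht1 : t ≤ 1) :
    ATA (t.toNNReal • μ + (1 - t).toNNReal • ν) a = t • ATA μ a + (1 - t) • ATA ν a := by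
  have hs0 : (0 : ℝ) ≤ 1 - t := by linarith
  ext i j
  have hμij := integrable_entry ha hintμ i j
  have hνij := integrable_entry ha hintν i j
  have hμ' : Integrable (fun θ => a θ i * a θ j) (t.toNNReal • μ) := by
    rw [nnreal_smul_measure]
    exact hμij.smul_measure ENNReal.coe_ne_top
  have hν' : Integrable (fun θ => a θ i * a θ j) ((1 - t).toNNReal • ν) := by
    rw [nnreal_smul_measure]
    exact hνij.smul_measure ENNReal.coe_ne_top
  have := integral_add_measure hμ' hν'
  simp only [ATA, Matrix.add_apply, Matrix.smul_apply, Matrix.of_apply, smul_eq_mul]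
  rw [this, integral_smul_nnreal_measure, integral_smul_nnreal_measure]
  simp [NNReal.smul_def, Real.coe_toNNReal _ ht0, Real.coe_toNNReal _ hs0]

end ATALin

/-- Convexity of the A-optimal objective `F^A[ρ] = Tr((AᵀA[ρ])⁻¹)` along linear
interpolations `t·μ + (1−t)·ν` of measures. -/
theorem Aoptimal_convex
    {Ω : Type*} [MeasurableSpace Ω] (μ ν : Measure Ω)
    [IsFiniteMeasure μ] [IsFiniteMeasure ν]
    {d : ℕ} (a : Ω → Fin d → ℝ) (ha : Measurable a)
    (hintμ : Integrable (fun θ => ∑ i, (a θ i) ^ 2) μ)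
    (hintν : Integrable (fun θ => ∑ i, (a θ i) ^ 2) ν)
    (hμ : (ATA μ a).PosDef) (hν : (ATA ν a).PosDef) :
    ∀ t ∈ Set.Icc (0 : ℝ) 1,
      (ATA (t.toNNReal • μ + (1 - t).toNNReal • ν) a).PosDef ∧
      ((ATA (t.toNNReal • μ + (1 - t).toNNReal • ν) a)⁻¹).trace ≤
        t * ((ATA μ a)⁻¹).trace + (1 - t) * ((ATA ν a)⁻¹).trace := by
  intro t ht
  rw [ATA_mix μ ν a ha hintμ hintν ht.1 ht.2]
  exact trace_inv_convex hμ hν ht.1 ht.2
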